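/- Let n be a positive integer, let 0 ≤ μ < L < ∞, and let 0 < α ≤ min{1, 2μ/L}. Let f₁, f₂ ∈ F_{μ,L}(ℝⁿ), f := f₁ − f₂, let N be a positive integer, and let x¹, …, x^{N+1}, y¹, …, y^N in ℝⁿ with subgradients g₁(xᵏ) ∈ ∂f₁(xᵏ) and g₂(xᵏ) ∈ ∂f₂(xᵏ) for k = 1, …, N+1 be generated by boosted DCA: g₂(xᵏ) ∈ ∂f₁(yᵏ) and x^{k+1} = yᵏ + α(yᵏ − xᵏ) for each k = 1, …, N. Then (1/2 + αμ/L)‖g₁(x¹) − g₂(x¹)‖² + Σ_{i=2}^{N} (1 + αμ/L)‖g₁(xⁱ) − g₂(xⁱ)‖² + ((1 − (μ/L)/2)/(1 − μ/L))‖g₁(x^{N+1}) − g₂(x^{N+1})‖² ≤ L·( f₁(x¹) − f₂(x¹) − f₁(x^{N+1}) + f₂(x^{N+1}) + ‖g₁(x^{N+1}) − g₂(x^{N+1})‖²/(2(L − μ)) ). -/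

import Mathlib

open scoped RealInnerProductSpace

/-- `g` is a subgradient of the (convex) function `f` at `x`. -/
def SubgradAt {n : ℕ} (f : EuclideanSpace ℝ (Fin n) → ℝ)
    (g x : EuclideanSpace ℝ (Fin n)) : Prop :=
  ∀ y, f x + (inner ℝ g (y - x) : ℝ) ≤ f y

/-- `f` belongs to the class `F_{μ,L}(ℝⁿ)`: minimum curvature `μ`, maximum curvature `L`. -/
def MemFClass {n : ℕ} (μ L : ℝ) (f : EuclideanSpace ℝ (Fin n) → ℝ) : Prop :=
  ConvexOn ℝ Set.univ (fun x => f x - μ / 2 * ‖x‖ ^ 2) ∧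
  ConvexOn ℝ Set.univ (fun x => L / 2 * ‖x‖ ^ 2 - f x)

private lemma le_of_forall_small {P Q R : ℝ} (hR : 0 ≤ R)
    (h : ∀ s : ℝ, 0 < s → s ≤ 1 → P ≤ Q + s * R) : P ≤ Q := by
  by_contra hc
  push_neg at hc
  have hPQ : 0 < P - Q := by linarith
  set s := min 1 ((P - Q) / (R + 1)) with hs
  have hs0 : 0 < s := lt_min one_pos (by positivity)
  have hs1 : s ≤ 1 := min_le_left _ _
  have h2 := h s hs0 hs1
  have h3 : s * R ≤ ((P - Q) / (R + 1)) * R :=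
    mul_le_mul_of_nonneg_right (min_le_right _ _) hR
  have h4 : ((P - Q) / (R + 1)) * R < P - Q := by
    rw [div_mul_eq_mul_div, div_lt_iff₀ (by linarith : (0:ℝ) < R + 1)]
    nlinarith
  linarith

private lemma norm_smul_sq {n : ℕ} (s : ℝ) (v : EuclideanSpace ℝ (Fin n)) :
    ‖s • v‖ ^ 2 = s ^ 2 * ‖v‖ ^ 2 := by
  rw [norm_smul, mul_pow, Real.norm_eq_abs, sq_abs]

private lemma norm_eq_add {n : ℕ} (x u : EuclideanSpace ℝ (Fin n)) :
    ‖u‖ ^ 2 = ‖x‖ ^ 2 + 2 * ⟪x, u - x⟫ + ‖u - x‖ ^ 2 := by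
  have h := norm_add_sq_real x (u - x)
  rwa [show x + (u - x) = u from by abel] at h

/-- Strong-convexity lower bound from a subgradient. -/
private lemma strong_lower {n : ℕ} {f : EuclideanSpace ℝ (Fin n) → ℝ} {c : ℝ} (hc : 0 ≤ c)
    (hcvx : ConvexOn ℝ Set.univ (fun u => f u - c / 2 * ‖u‖ ^ 2))
    {g x : EuclideanSpace ℝ (Fin n)} (hg : SubgradAt f g x) (u : EuclideanSpace ℝ (Fin n)) :
    f x + ⟪g, u - x⟫ + c / 2 * ‖u - x‖ ^ 2 ≤ f u := by
  have hRnn : (0:ℝ) ≤ c / 2 * ‖u - x‖ ^ 2 := by positivity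
  have key : ⟪g, u - x⟫ ≤ f u - f x - c / 2 * ‖u - x‖ ^ 2 := by
    apply le_of_forall_small hRnn
    intro s hs0 hs1
    have hcomb : (1 - s) • x + s • u = x + s • (u - x) := by
      rw [sub_smul, one_smul, smul_sub]; abel
    have hcx := hcvx.2 (Set.mem_univ x) (Set.mem_univ u)
      (by linarith : (0:ℝ) ≤ 1 - s) hs0.le (by ring)
    dsimp only at hcx
    simp only [smul_eq_mul] at hcx
    rw [hcomb] at hcx
    have hsg := hg (x + s • (u - x))
    rw [show (x + s • (u - x)) - x = s • (u - x) from by abel,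
      real_inner_smul_right] at hsg
    have hnus : ‖x + s • (u - x)‖ ^ 2
        = ‖x‖ ^ 2 + 2 * (s * ⟪x, u - x⟫) + s ^ 2 * ‖u - x‖ ^ 2 := by
      rw [norm_add_sq_real, real_inner_smul_right, norm_smul_sq]
    have hnu := norm_eq_add x u
    rw [hnus, hnu] at hcx
    have hmain : s * ⟪g, u - x⟫
        ≤ s * ((f u - f x - c / 2 * ‖u - x‖ ^ 2) + s * (c / 2 * ‖u - x‖ ^ 2)) := by
      nlinarith [hcx, hsg]
    exact le_of_mul_le_mul_left hmain hs0
  linarith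

/-- Descent lemma (smoothness upper bound) from a subgradient. -/
private lemma descent {n : ℕ} {f : EuclideanSpace ℝ (Fin n) → ℝ} {L : ℝ} (hL : 0 < L)
    (hcvx : ConvexOn ℝ Set.univ (fun u => L / 2 * ‖u‖ ^ 2 - f u))
    {g x : EuclideanSpace ℝ (Fin n)} (hg : SubgradAt f g x) (u : EuclideanSpace ℝ (Fin n)) :
    f u ≤ f x + ⟪g, u - x⟫ + L / 2 * ‖u - x‖ ^ 2 := by
  apply le_of_forall_small (by positivity : (0:ℝ) ≤ L / 2 * ‖u - x‖ ^ 2)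
  intro s hs0 hs1
  have h1s : (0:ℝ) < 1 + s := by linarith
  have h1sne : (1:ℝ) + s ≠ 0 := ne_of_gt h1s
  set v := x - s • (u - x) with hv
  have hcomb : (s / (1 + s)) • u + (1 / (1 + s)) • v = x := by
    have h' : (1 + s) • ((s / (1 + s)) • u + (1 / (1 + s)) • v) = (1 + s) • x := by
      rw [smul_add, smul_smul, smul_smul,
        show (1 + s) * (s / (1 + s)) = s from by field_simp,
        show (1 + s) * (1 / (1 + s)) = 1 from by field_simp, one_smul, hv,
        add_smul, one_smul, smul_sub]
      abel
    exact smul_right_injective (EuclideanSpace ℝ (Fin n)) h1sne h'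
  have hcx := hcvx.2 (Set.mem_univ u) (Set.mem_univ v)
    (by positivity : (0:ℝ) ≤ s / (1 + s)) (by positivity : (0:ℝ) ≤ 1 / (1 + s))
    (by field_simp; try ring)
  dsimp only at hcx
  simp only [smul_eq_mul] at hcx
  rw [hcomb] at hcx
  have hmul := mul_le_mul_of_nonneg_left hcx h1s.le
  have hre : (1 + s) * ((s / (1 + s)) * (L / 2 * ‖u‖ ^ 2 - f u)
        + (1 / (1 + s)) * (L / 2 * ‖v‖ ^ 2 - f v))
      = s * (L / 2 * ‖u‖ ^ 2 - f u) + (L / 2 * ‖v‖ ^ 2 - f v) := by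
    field_simp
  rw [hre] at hmul
  have hsg := hg v
  rw [show v - x = -(s • (u - x)) from by rw [hv]; abel, inner_neg_right,
    real_inner_smul_right] at hsg
  have hnv : ‖v‖ ^ 2 = ‖x‖ ^ 2 - 2 * (s * ⟪x, u - x⟫) + s ^ 2 * ‖u - x‖ ^ 2 := by
    rw [hv, norm_sub_sq_real, real_inner_smul_right, norm_smul_sq]
  have hnu := norm_eq_add x u
  rw [hnv, hnu] at hmul
  have hmain : s * (f u)
      ≤ s * ((f x + ⟪g, u - x⟫ + L / 2 * ‖u - x‖ ^ 2) + s * (L / 2 * ‖u - x‖ ^ 2)) := by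
    nlinarith [hmul, hsg]
  exact le_of_mul_le_mul_left hmain hs0

/-- Interpolation inequality for the class `F_{μ,L}`, denominator-cleared form. -/
private lemma interp {n : ℕ} {μ L : ℝ} (hμ : 0 ≤ μ) (hμL : μ < L)
    {f : EuclideanSpace ℝ (Fin n) → ℝ} (hf : MemFClass μ L f)
    {a b ga gb : EuclideanSpace ℝ (Fin n)}
    (ha : SubgradAt f ga a) (hb : SubgradAt f gb b) :
    ‖ga - gb‖ ^ 2 + μ * L * ‖a - b‖ ^ 2 - 2 * μ * ⟪ga - gb, a - b⟫
      ≤ 2 * (L - μ) * (f a - f b - ⟪gb, a - b⟫) := by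
  have hL0 : 0 < L := lt_of_le_of_lt hμ hμL
  have hLμ : 0 < L - μ := sub_pos.mpr hμL
  set w : EuclideanSpace ℝ (Fin n) := μ • (a - b) - (ga - gb) with hw
  have hBw : ⟪ga, w⟫ - ⟪gb, w⟫ - μ * ⟪w, a - b⟫ = -‖w‖ ^ 2 := by
    have e : ⟪w, w⟫ = ⟪w, μ • (a - b)⟫ - ⟪w, ga - gb⟫ := by
      rw [← inner_sub_right, ← hw]
    have e2 : ⟪ga, w⟫ - ⟪gb, w⟫ = ⟪w, ga - gb⟫ := by
      rw [← inner_sub_left, real_inner_comm]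
    have e3 : μ * ⟪w, a - b⟫ = ⟪w, μ • (a - b)⟫ := (real_inner_smul_right _ _ _).symm
    have e4 : ⟪w, w⟫ = ‖w‖ ^ 2 := real_inner_self_eq_norm_sq w
    linarith [e, e2, e3, e4]
  have hs : ∀ s : ℝ, 0 ≤ (L - μ) / 2 * ‖w‖ ^ 2 * s ^ 2 - ‖w‖ ^ 2 * s
      + (f a - f b - ⟪gb, a - b⟫ - μ / 2 * ‖a - b‖ ^ 2) := by
    intro s
    have hz1 := strong_lower hμ hf.1 hb (a + s • w)
    have hz2 := descent hL0 hf.2 ha (a + s • w)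
    rw [show (a + s • w) - b = s • w + (a - b) from by abel] at hz1
    rw [show (a + s • w) - a = s • w from by abel] at hz2
    rw [inner_add_right, real_inner_smul_right] at hz1
    rw [norm_add_sq_real, real_inner_smul_left, norm_smul_sq] at hz1
    rw [real_inner_smul_right, norm_smul_sq] at hz2
    have hBws : s * (⟪ga, w⟫ - ⟪gb, w⟫ - μ * ⟪w, a - b⟫) = s * (-‖w‖ ^ 2) := by
      rw [hBw]
    nlinarith [hz1, hz2, hBws]
  have hne : L - μ ≠ 0 := ne_of_gt hLμ
  have h := hs (L - μ)⁻¹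
  have hexp : (L - μ) ^ 2 * ((L - μ) / 2 * ‖w‖ ^ 2 * ((L - μ)⁻¹) ^ 2 - ‖w‖ ^ 2 * (L - μ)⁻¹
        + (f a - f b - ⟪gb, a - b⟫ - μ / 2 * ‖a - b‖ ^ 2))
      = (L - μ) / 2 * ‖w‖ ^ 2 - (L - μ) * ‖w‖ ^ 2
        + (L - μ) ^ 2 * (f a - f b - ⟪gb, a - b⟫ - μ / 2 * ‖a - b‖ ^ 2) := by
    field_simp
  have h2 : 0 ≤ (L - μ) / 2 * ‖w‖ ^ 2 - (L - μ) * ‖w‖ ^ 2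
      + (L - μ) ^ 2 * (f a - f b - ⟪gb, a - b⟫ - μ / 2 * ‖a - b‖ ^ 2) := by
    have h3 := mul_nonneg (sq_nonneg (L - μ)) h
    rwa [hexp] at h3
  have h4 : (L - μ) * ‖w‖ ^ 2
      ≤ (L - μ) * (2 * (L - μ) * (f a - f b - ⟪gb, a - b⟫ - μ / 2 * ‖a - b‖ ^ 2)) := by
    nlinarith [h2]
  have h5 := le_of_mul_le_mul_left h4 hLμ
  have hwexp : ‖w‖ ^ 2
      = μ ^ 2 * ‖a - b‖ ^ 2 - 2 * (μ * ⟪a - b, ga - gb⟫) + ‖ga - gb‖ ^ 2 := by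
    rw [hw, norm_sub_sq_real, real_inner_smul_left, norm_smul_sq]
  have hcomm : 2 * (μ * ⟪a - b, ga - gb⟫) = 2 * (μ * ⟪ga - gb, a - b⟫) := by
    rw [real_inner_comm]
  nlinarith [h5, hwexp, hcomm]

/-- Expansion of the square of a three-term combination. -/
private lemma sq_expand3 {n : ℕ} (u v w : EuclideanSpace ℝ (Fin n)) (a b c : ℝ) :
    ‖a • u + b • v + c • w‖ ^ 2
      = a ^ 2 * ‖u‖ ^ 2 + b ^ 2 * ‖v‖ ^ 2 + c ^ 2 * ‖w‖ ^ 2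
        + 2 * (a * b) * ⟪u, v⟫ + 2 * (a * c) * ⟪u, w⟫ + 2 * (b * c) * ⟪v, w⟫ := by
  rw [norm_add_sq_real, norm_add_sq_real, inner_add_left,
    real_inner_smul_left, real_inner_smul_left, real_inner_smul_right,
    real_inner_smul_right, real_inner_smul_right, real_inner_smul_left, norm_smul_sq, norm_smul_sq, norm_smul_sq]
  ring

/-- One step of the boosted DCA. -/
private lemma step_ineq {n : ℕ} {μ L α : ℝ} (hμ0 : 0 < μ) (hμL : μ < L)
    (hα0 : 0 < α) (hα1 : α ≤ 1) (hαL : α * L ≤ 2 * μ)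
    {f₁ f₂ : EuclideanSpace ℝ (Fin n) → ℝ}
    (hf₁ : MemFClass μ L f₁) (hf₂ : MemFClass μ L f₂)
    {xk yk xk1 g1k g2k g1k1 g2k1 : EuclideanSpace ℝ (Fin n)}
    (h1 : SubgradAt f₁ g1k xk) (h2 : SubgradAt f₂ g2k xk)
    (h3 : SubgradAt f₁ g2k yk)
    (h4 : SubgradAt f₁ g1k1 xk1) (h5 : SubgradAt f₂ g2k1 xk1)
    (hstep : xk1 = yk + α • (yk - xk)) :
    (1 / 2 + α * μ / L) * ‖g1k - g2k‖ ^ 2 + 1 / 2 * ‖g1k1 - g2k1‖ ^ 2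
      ≤ L * (f₁ xk - f₂ xk - f₁ xk1 + f₂ xk1) := by
  have hL0 : 0 < L := hμ0.trans hμL
  have hLμ : 0 < L - μ := sub_pos.mpr hμL
  have hμle : (0:ℝ) ≤ μ := hμ0.le
  -- the five interpolation inequalities
  have J1 := interp hμle hμL hf₁ h1 h3
  have J2 := interp hμle hμL hf₁ h3 h1
  have J3 := interp hμle hμL hf₁ h3 h4
  have J4 := interp hμle hμL hf₁ h4 h3
  have J5 := interp hμle hμL hf₂ h5 h2
  -- vector bridges
  have exy : xk - yk = -(yk - xk) := by abel
  have eyx1 : yk - xk1 = (-α) • (yk - xk) := by rw [hstep, neg_smul]; abel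
  have ex1y : xk1 - yk = α • (yk - xk) := by rw [hstep]; abel
  have ex1x : xk1 - xk = (1 + α) • (yk - xk) := by
    rw [hstep, add_smul, one_smul]; abel
  have eg21 : g2k - g1k = -(g1k - g2k) := by abel
  have eg211 : g2k - g1k1 = -(g1k1 - g2k) := by abel
  have b6 : ⟪g1k, yk - xk⟫ = ⟪g2k, yk - xk⟫ + ⟪g1k - g2k, yk - xk⟫ := by
    rw [← inner_add_left, show g2k + (g1k - g2k) = g1k from by abel]
  have b10 : ⟪g1k1, yk - xk⟫ = ⟪g2k, yk - xk⟫ + ⟪g1k1 - g2k, yk - xk⟫ := by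
    rw [← inner_add_left, show g2k + (g1k1 - g2k) = g1k1 from by abel]
  -- J1 : a = xk (g1k), b = yk (g2k)
  rw [exy] at J1
  simp only [norm_neg, inner_neg_right] at J1
  -- J2 : a = yk (g2k), b = xk (g1k)
  rw [eg21, b6] at J2
  simp only [norm_neg, inner_neg_left] at J2
  -- J3 : a = yk (g2k), b = xk1 (g1k1)
  rw [eg211, eyx1] at J3
  simp only [norm_neg, inner_neg_left, real_inner_smul_right, norm_smul_sq] at J3
  rw [b10] at J3
  -- J4 : a = xk1 (g1k1), b = yk (g2k)
  rw [ex1y] at J4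
  simp only [real_inner_smul_right, norm_smul_sq] at J4
  -- J5 : a = xk1 (g2k1), b = xk (g2k)  (for f₂)
  rw [ex1x] at J5
  simp only [real_inner_smul_right, norm_smul_sq] at J5
  -- the three squares
  have base1 : (0:ℝ) ≤ ‖(g1k - g2k) + L • (yk - xk)‖ ^ 2 := by positivity
  rw [norm_add_sq_real, real_inner_smul_right, norm_smul_sq] at base1
  have base2 : (0:ℝ) ≤ ‖(g1k1 - g2k) - (α * μ) • (yk - xk)‖ ^ 2 := by positivity
  rw [norm_sub_sq_real, real_inner_smul_right, norm_smul_sq] at base2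
  have base3 : (0:ℝ) ≤ ‖μ • (g2k1 - g2k) + (L - μ) • (g1k1 - g2k)
      + (-(μ * (1 + α) * L)) • (yk - xk)‖ ^ 2 := by positivity
  rw [sq_expand3] at base3
  have bcomm : ⟪g2k1 - g2k, g1k1 - g2k⟫ = ⟪g1k1 - g2k, g2k1 - g2k⟫ :=
    real_inner_comm _ _
  rw [bcomm] at base3
  -- scaled hypotheses
  have hm1 := mul_le_mul_of_nonneg_left J1
    (show (0:ℝ) ≤ α * μ * L * (L + 2 * α * μ) by positivity)
  have hm2 := mul_le_mul_of_nonneg_left J2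
    (show (0:ℝ) ≤ 2 * α ^ 2 * μ ^ 2 * L by positivity)
  have hm3 := mul_le_mul_of_nonneg_left J3
    (show (0:ℝ) ≤ μ * L ^ 2 by positivity)
  have hm4 := mul_le_mul_of_nonneg_left J4
    (show (0:ℝ) ≤ (1 - α) * μ * L ^ 2 from
      mul_nonneg (mul_nonneg (by linarith) hμle) (by positivity))
  have hm5 := mul_le_mul_of_nonneg_left J5
    (show (0:ℝ) ≤ α * μ * L ^ 2 by positivity)
  have hq1 := mul_nonneg
    (show (0:ℝ) ≤ α * μ ^ 2 * (L + 2 * α * L + 2 * α * μ) by positivity) base1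
  have hq2 := mul_nonneg
    (show (0:ℝ) ≤ L ^ 2 * (2 * μ - α * L) from
      mul_nonneg (by positivity) (by linarith)) base2
  have hq3 := mul_nonneg (show (0:ℝ) ≤ α * L by positivity) base3
  -- the cleared inequality (exact certificate identity)
  have hclr : (α * μ * (L - μ)) * ((L + 2 * α * μ) * ‖g1k - g2k‖ ^ 2
        + L * (‖g1k1 - g2k‖ ^ 2 + ‖g2k1 - g2k‖ ^ 2
          - 2 * ⟪g1k1 - g2k, g2k1 - g2k⟫))
      ≤ (α * μ * (L - μ)) * (2 * L ^ 2 * (f₁ xk - f₂ xk - f₁ xk1 + f₂ xk1)) := by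
    linarith [hm1, hm2, hm3, hm4, hm5, hq1, hq2, hq3]
  have hpoly := le_of_mul_le_mul_left hclr (by positivity : (0:ℝ) < α * μ * (L - μ))
  have hCE : ‖g1k1 - g2k1‖ ^ 2 = ‖g1k1 - g2k‖ ^ 2
      - 2 * ⟪g1k1 - g2k, g2k1 - g2k⟫ + ‖g2k1 - g2k‖ ^ 2 := by
    rw [show g1k1 - g2k1 = (g1k1 - g2k) - (g2k1 - g2k) from by abel, norm_sub_sq_real]
  have h2L : (0:ℝ) < 2 * L := by positivity
  refine le_of_mul_le_mul_left ?_ h2L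
  have hexp2 : 2 * L * ((1 / 2 + α * μ / L) * ‖g1k - g2k‖ ^ 2 + 1 / 2 * ‖g1k1 - g2k1‖ ^ 2)
      = (L + 2 * α * μ) * ‖g1k - g2k‖ ^ 2 + L * ‖g1k1 - g2k1‖ ^ 2 := by
    field_simp
  rw [hexp2, hCE]
  linarith [hpoly]

/-- Weighted-sum target inequality for `N` iterations of the boosted DCA. -/
theorem boosted_dca_target_inequality
    (n : ℕ) (hn : 0 < n)
    (μ L : ℝ) (hμ : 0 ≤ μ) (hμL : μ < L)
    (α : ℝ) (hα0 : 0 < α) (hα1 : α ≤ min 1 (2 * μ / L))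
    (f₁ f₂ : EuclideanSpace ℝ (Fin n) → ℝ)
    (hf₁ : MemFClass μ L f₁) (hf₂ : MemFClass μ L f₂)
    (f : EuclideanSpace ℝ (Fin n) → ℝ) (hf : ∀ u, f u = f₁ u - f₂ u)
    (N : ℕ) (hN : 0 < N)
    (x y g1 g2 : ℕ → EuclideanSpace ℝ (Fin n))
    (hg1 : ∀ k ∈ Finset.Icc 1 (N + 1), SubgradAt f₁ (g1 k) (x k))
    (hg2 : ∀ k ∈ Finset.Icc 1 (N + 1), SubgradAt f₂ (g2 k) (x k))
    (hy : ∀ k ∈ Finset.Icc 1 N, SubgradAt f₁ (g2 k) (y k))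
    (hstep : ∀ k ∈ Finset.Icc 1 N, x (k + 1) = y k + α • (y k - x k)) :
    (1 / 2 + α * μ / L) * ‖g1 1 - g2 1‖ ^ 2
      + ∑ i ∈ Finset.Icc 2 N, (1 + α * μ / L) * ‖g1 i - g2 i‖ ^ 2
      + ((1 - (μ / L) / 2) / (1 - μ / L)) * ‖g1 (N + 1) - g2 (N + 1)‖ ^ 2
    ≤ L * (f₁ (x 1) - f₂ (x 1) - f₁ (x (N + 1)) + f₂ (x (N + 1))
        + ‖g1 (N + 1) - g2 (N + 1)‖ ^ 2 / (2 * (L - μ))) := by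
  have hL0 : 0 < L := lt_of_le_of_lt hμ hμL
  have hα1' : α ≤ 1 := hα1.trans (min_le_left _ _)
  have hα2 : α ≤ 2 * μ / L := hα1.trans (min_le_right _ _)
  have hμ0 : 0 < μ := by
    rcases eq_or_lt_of_le hμ with h | h
    · exfalso
      rw [← h] at hα2
      norm_num at hα2
      linarith
    · exact h
  have hαL : α * L ≤ 2 * μ := by
    rw [le_div_iff₀ hL0] at hα2
    exact hα2
  have step : ∀ k, 1 ≤ k → k ≤ N →
      (1 / 2 + α * μ / L) * ‖g1 k - g2 k‖ ^ 2 + 1 / 2 * ‖g1 (k + 1) - g2 (k + 1)‖ ^ 2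
        ≤ L * (f₁ (x k) - f₂ (x k) - f₁ (x (k + 1)) + f₂ (x (k + 1))) := by
    intro k h1k hkN
    have hmem : k ∈ Finset.Icc 1 (N + 1) := Finset.mem_Icc.mpr ⟨h1k, by omega⟩
    have hmem1 : k + 1 ∈ Finset.Icc 1 (N + 1) := Finset.mem_Icc.mpr ⟨by omega, by omega⟩
    have hmemN : k ∈ Finset.Icc 1 N := Finset.mem_Icc.mpr ⟨h1k, hkN⟩
    exact step_ineq hμ0 hμL hα0 hα1' hαL hf₁ hf₂ (hg1 k hmem) (hg2 k hmem)
      (hy k hmemN) (hg1 (k + 1) hmem1) (hg2 (k + 1) hmem1) (hstep k hmemN)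
  have claim : ∀ M, 1 ≤ M → M ≤ N →
      (1 / 2 + α * μ / L) * ‖g1 1 - g2 1‖ ^ 2
        + (∑ i ∈ Finset.Icc 2 M, (1 + α * μ / L) * ‖g1 i - g2 i‖ ^ 2)
        + 1 / 2 * ‖g1 (M + 1) - g2 (M + 1)‖ ^ 2
      ≤ L * (f₁ (x 1) - f₂ (x 1) - f₁ (x (M + 1)) + f₂ (x (M + 1))) := by
    intro M hM1
    induction M, hM1 using Nat.le_induction with
    | base =>
      intro h1N
      rw [show Finset.Icc 2 1 = ∅ from Finset.Icc_eq_empty (by omega), Finset.sum_empty]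
      have := step 1 le_rfl h1N
      linarith
    | succ M hM ih =>
      intro hM1N
      have ihh := ih (by omega)
      have hs := step (M + 1) (by omega) hM1N
      rw [Finset.sum_Icc_succ_top (show 2 ≤ M + 1 by omega)]
      linarith
  have hclaim := claim N hN le_rfl
  have hLμ0 : L - μ ≠ 0 := ne_of_gt (sub_pos.mpr hμL)
  have hL0' : L ≠ 0 := ne_of_gt hL0
  have hne1 : 1 - μ / L ≠ 0 := by
    rw [sub_ne_zero]
    intro hh
    have : L = μ := by
      field_simp at hh
      linarith
    linarith
  have hco : (1 - (μ / L) / 2) / (1 - μ / L) = 1 / 2 + L / (2 * (L - μ)) := by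
    field_simp
    ring
  rw [hco]
  have hid : L * (f₁ (x 1) - f₂ (x 1) - f₁ (x (N + 1)) + f₂ (x (N + 1))
        + ‖g1 (N + 1) - g2 (N + 1)‖ ^ 2 / (2 * (L - μ)))
      = L * (f₁ (x 1) - f₂ (x 1) - f₁ (x (N + 1)) + f₂ (x (N + 1)))
        + (L / (2 * (L - μ))) * ‖g1 (N + 1) - g2 (N + 1)‖ ^ 2 := by
    field_simp
  rw [hid]
  have hrw : (1 / 2 + L / (2 * (L - μ))) * ‖g1 (N + 1) - g2 (N + 1)‖ ^ 2
      = 1 / 2 * ‖g1 (N + 1) - g2 (N + 1)‖ ^ 2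
        + (L / (2 * (L - μ))) * ‖g1 (N + 1) - g2 (N + 1)‖ ^ 2 := by ring
  rw [hrw]
  linarith
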